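/- Suppose g is runnable, the interface I := Int(f,g) equals the component set of a system e, f implements e via a surjective map ρ (i.e., e is an input of f), and g implements e via some map σ. Then there exists a runnable composition of f and g. -/

import Mathlib

/-- A system: a set of behaviours `B` together with a map into component snapshots. -/
structure System (Comp : Type) (Beh : Comp → Type) where
  B : Type
  C : Set Comp
  f : B → (c : Comp) → c ∈ C → Beh c

variable {Comp : Type} {Beh : Comp → Type}

/-- `σ` is an implementation of `g` in `f`: `Comp(g) ⊆ Comp(f)` and `f_{Comp(g)} = g ∘ σ`. -/
def Implements (f g : System Comp Beh) (σ : f.B → g.B) : Prop :=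
  g.C ⊆ f.C ∧ ∀ (b : f.B) (c : Comp) (hg : c ∈ g.C) (hf : c ∈ f.C),
    f.f b c hf = g.f (σ b) c hg
/-- `(x,y)` is compatible: the interface is empty or `f_I(x) = g_I(y)`. -/
def Compatible (f g : System Comp Beh) (x : f.B) (y : g.B) : Prop :=
  f.C ∩ g.C = ∅ ∨
    ∀ (c : Comp) (hf : c ∈ f.C) (hg : c ∈ g.C), f.f x c hf = g.f y c hg

open Classical in
/-- The canonical free composition `f ⊗ g`. -/
noncomputable def tensor (f g : System Comp Beh) : System Comp Beh where
  B := {p : f.B × g.B // Compatible f g p.1 p.2}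
  C := f.C ∪ g.C
  f := fun p c hc =>
    if hf : c ∈ f.C then f.f p.val.1 c hf
    else g.f p.val.2 c (Or.resolve_left hc hf)
/-- `h` is a composition of `f` and `g`. -/
def IsComposition (h f g : System Comp Beh) : Prop :=
  h.C = f.C ∪ g.C ∧ (∃ σ : h.B → f.B, Implements h f σ) ∧
    (∃ ρ : h.B → g.B, Implements h g ρ)

/-! Surjectivity of `ρ` gives, for a behaviour `y` of `g`, a behaviour `x` of `f` with
`ρ x = σ y`. Both `f` and `g` agree with `e` on the interface, so `(x, y)` is compatible, i.e. a
behaviour of the free composition `tensor f g`. -/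

section

variable {f g e : System Comp Beh}

theorem compatible_of_implements_eq {ρ : f.B → e.B} {σ : g.B → e.B}
    (hI : f.C ∩ g.C ⊆ e.C) (hρ : Implements f e ρ) (hσ : Implements g e σ)
    {x : f.B} {y : g.B} (hxy : ρ x = σ y) : Compatible f g x y := by
  refine Or.inr fun c hf hg => ?_
  have he : c ∈ e.C := hI ⟨hf, hg⟩
  rw [hρ.2 x c he hf, hσ.2 y c he hg, hxy]

theorem Compatible.eq_of_mem {x : f.B} {y : g.B} (hxy : Compatible f g x y) {c : Comp}
    (hf : c ∈ f.C) (hg : c ∈ g.C) : f.f x c hf = g.f y c hg :=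
  hxy.resolve_left (Set.nonempty_iff_ne_empty.mp ⟨c, hf, hg⟩) c hf hg

theorem implements_tensor_fst : Implements (tensor f g) f fun p => p.val.1 :=
  ⟨Set.subset_union_left, fun _ _ hf _ => dif_pos hf⟩

theorem implements_tensor_snd : Implements (tensor f g) g fun p => p.val.2 := by
  refine ⟨Set.subset_union_right, fun p c hg _ => ?_⟩
  by_cases hf : c ∈ f.C
  · exact (dif_pos hf).trans (p.property.eq_of_mem hf hg)
  · exact dif_neg hf

theorem isComposition_tensor : IsComposition (tensor f g) f g :=
  ⟨rfl, ⟨_, implements_tensor_fst⟩, ⟨_, implements_tensor_snd⟩⟩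

end

/-- if `g` is runnable, the interface of `f` and `g` is the
component set of a system `e`, `f` implements `e` via a surjective map
(`e` is an input of `f`) and `g` implements `e`, then there is a runnable
composition of `f` and `g`. -/
theorem runnable_composition_of_input (f g e : System Comp Beh)
    (hg : Nonempty g.B)
    (hIe : e.C = f.C ∩ g.C)
    (ρ : f.B → e.B) (hρ : Implements f e ρ) (hsurj : Function.Surjective ρ)
    (σ : g.B → e.B) (hσ : Implements g e σ) :
    ∃ h : System Comp Beh, IsComposition h f g ∧ Nonempty h.B := by
  obtain ⟨y⟩ := hg
  obtain ⟨x, hx⟩ := hsurj (σ y)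
  exact ⟨tensor f g, isComposition_tensor,
    ⟨⟨(x, y), compatible_of_implements_eq hIe.ge hρ hσ hx⟩⟩⟩
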